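/- Let Θ be a subinterval of ℝ and let g : [0,∞) × Θ → ℝ satisfy the Spence–Mirrlees condition. Suppose v : Θ → ℝ is g-convex, v is continuously differentiable on the interval (θ₋, θ_R) where θ_R = sup{θ ∈ Θ : ∂^g v(θ) ≠ ∅} and θ₋ is the left endpoint of Θ, the g-subdifferential ∂^g v(θ) is nonempty for every θ ∈ (θ₋, θ_R), and the selections x*(θ) ∈ ∂^g v(θ) satisfy lim_{θ↓θ₋} x*(θ) = 0 and lim_{θ↑θ_R} x*(θ) = ∞. Then there is at most one function ψ : [0,∞) → ℝ ∪ {+∞} with ψ(0) = 0, x ↦ g(x,θ) − ψ(x) upper semicontinuous for each θ ∈ Θ, and ψ^g = v on Θ, namely ψ = v^g. -/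

import Mathlib

open Set

/-- The Spence–Mirrlees condition for `g = g(x,θ)` on `Dx × Dθ`. -/
def SpenceMirrlees (Dx Dθ : Set ℝ) (g : ℝ → ℝ → ℝ) : Prop :=
  ContDiff ℝ 2 (Function.uncurry g) ∧
  (∀ x ∈ Dx, StrictMonoOn (fun θ => deriv (fun x' => g x' θ) x) Dθ) ∧
  (∀ θ ∈ Dθ, StrictMonoOn (fun x => deriv (fun θ' => g x θ') θ) Dx)

/-- `v^g(x) = sup_{θ ∈ Θ}(g(x,θ) - v(θ))`, the `g`-convex dual of `v : Θ → ℝ`. -/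
noncomputable def gDualV (Θ : Set ℝ) (g : ℝ → ℝ → ℝ) (v : ℝ → ℝ) (x : ℝ) : EReal :=
  ⨆ θ ∈ Θ, ((g x θ : EReal) - (v θ : EReal))

/-- `w^g(θ) = sup_{x ≥ 0}(g(x,θ) - w(x))`, the `g`-convex dual of `w : [0,∞) → ℝ∪{+∞}`. -/
noncomputable def gDualW (g : ℝ → ℝ → ℝ) (w : ℝ → EReal) (θ : ℝ) : EReal :=
  ⨆ x ∈ Ici (0:ℝ), ((g x θ : EReal) - w x)

/-- `v` is `g`-convex on `Θ` if `(v^g)^g = v` there. -/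
def GConvex (Θ : Set ℝ) (g : ℝ → ℝ → ℝ) (v : ℝ → ℝ) : Prop :=
  ∀ θ ∈ Θ, (v θ : EReal) = ⨆ x ∈ Ici (0:ℝ), ((g x θ : EReal) - gDualV Θ g v x)

/-- The `g`-subdifferential `∂^g v(θ) = { x ≥ 0 : v(θ) + v^g(x) = g(x,θ) }`. -/
def gSubdiff (Θ : Set ℝ) (g : ℝ → ℝ → ℝ) (v : ℝ → ℝ) (θ : ℝ) : Set ℝ :=
  {x | 0 ≤ x ∧ (v θ : EReal) + gDualV Θ g v x = (g x θ : EReal)}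

/-!
Since `ψ^g = v`, always `v^g ≤ ψ`. For `θ` in the open interval `(θm, θR)` the supremum defining
`ψ^g θ = v θ` is attained: `g · θ - ψ` is upper semicontinuous, and increasing differences (the
Spence–Mirrlees condition) keep maximisers bounded. A maximiser lies in `∂^g v(θ)` and satisfies
`ψ = v^g` there, and since `v` is differentiable at `θ`, `∂^g v(θ)` is a singleton. Every `x > 0`
lies in some such `∂^g v(θ)`, because a selection is monotone, has infimum `0` and is unbounded.
At `x = 0`, `ψ 0 = 0` and upper semicontinuity at `0` give `v^g 0 ≥ 0`.
-/

open Filter Topology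

namespace EReal

theorem coe_sub_le_coe_iff {a b : ℝ} {p : EReal} :
    (a : EReal) - p ≤ b ↔ ((a - b : ℝ) : EReal) ≤ p := by
  induction p with
  | bot => simp [-coe_sub]
  | coe r => norm_cast; constructor <;> intro <;> linarith
  | top => simp [-coe_sub]

theorem coe_sub_lt_coe_iff {a b : ℝ} {p : EReal} :
    (a : EReal) - p < b ↔ ((a - b : ℝ) : EReal) < p := by
  induction p with
  | bot => simp [-coe_sub]
  | coe r => norm_cast; constructor <;> intro <;> linarith
  | top => simp [-coe_sub]

theorem coe_sub_eq_coe_iff {a b : ℝ} {p : EReal} :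
    (a : EReal) - p = b ↔ p = ((a - b : ℝ) : EReal) := by
  induction p with
  | bot => simp [-coe_sub]
  | coe r => norm_cast; constructor <;> intro <;> linarith
  | top => simp [-coe_sub]

theorem coe_add_eq_coe_iff {a b : ℝ} {p : EReal} :
    (a : EReal) + p = b ↔ p = ((b - a : ℝ) : EReal) := by
  induction p with
  | bot => simp [-coe_sub]
  | coe r => norm_cast; constructor <;> intro <;> linarith
  | top => simp [-coe_sub]

end EReal

theorem UpperSemicontinuousOn.exists_eq_biSup_Ici {α : Type*} [CompleteLinearOrder α]
    {f : ℝ → α} {a M : ℝ} {c : α} (hf : UpperSemicontinuousOn f (Ici a))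
    (htail : ∀ x, M ≤ x → f x ≤ c) (hc : c < ⨆ x ∈ Ici a, f x) :
    ∃ x ∈ Ici a, f x = ⨆ y ∈ Ici a, f y := by
  obtain ⟨x, hx, hmax⟩ := (hf.mono Icc_subset_Ici_self).exists_isMaxOn
    (nonempty_Icc.2 (le_max_left a M)) isCompact_Icc
  refine ⟨x, hx.1, le_antisymm (le_iSup₂_of_le x hx.1 le_rfl) ?_⟩
  have hle : ⨆ y ∈ Ici a, f y ≤ max (f x) c := iSup₂_le fun y hy => by
    rcases le_or_gt y (max a M) with h | h
    · exact le_max_of_le_left (hmax ⟨hy, h⟩)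
    · exact le_max_of_le_right (htail y ((le_max_right a M).trans h.le))
  exact (le_max_iff.1 hle).resolve_right hc.not_ge

def HasStrictIncreasingDifferences (D Θ : Set ℝ) (g : ℝ → ℝ → ℝ) : Prop :=
  ∀ ⦃x⦄, x ∈ D → ∀ ⦃x'⦄, x' ∈ D → x < x' → ∀ ⦃θ⦄, θ ∈ Θ → ∀ ⦃θ'⦄, θ' ∈ Θ → θ < θ' →
    g x' θ - g x θ < g x' θ' - g x θ'

section IncreasingDifferences

variable {D Θ : Set ℝ} {g : ℝ → ℝ → ℝ}

theorem hasStrictIncreasingDifferences_of_strictMonoOn_deriv (hΘ : Θ.OrdConnected)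
    (hdiff : ∀ x, Differentiable ℝ (g x))
    (hsm : ∀ θ ∈ Θ, StrictMonoOn (fun x => deriv (g x) θ) D) :
    HasStrictIncreasingDifferences D Θ g := by
  intro x hx x' hx' hxx' θ hθ θ' hθ' hθθ'
  have hF : StrictMonoOn (fun t => g x' t - g x t) (Icc θ θ') := by
    refine strictMonoOn_of_deriv_pos (convex_Icc θ θ')
      ((hdiff x').continuous.sub (hdiff x).continuous).continuousOn fun t ht => ?_
    rw [interior_Icc] at ht
    rw [deriv_fun_sub (hdiff x' t) (hdiff x t), sub_pos]
    exact hsm t (hΘ.out hθ hθ' (Ioo_subset_Icc_self ht)) hx hx' hxx'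
  have := hF (left_mem_Icc.2 hθθ'.le) (right_mem_Icc.2 hθθ'.le) hθθ'
  simp only at this
  linarith

theorem HasStrictIncreasingDifferences.sub_le_sub (h : HasStrictIncreasingDifferences D Θ g)
    {x x' θ θ' : ℝ} (hx : x ∈ D) (hx' : x' ∈ D) (hxx' : x ≤ x') (hθ : θ ∈ Θ) (hθ' : θ' ∈ Θ)
    (hθθ' : θ ≤ θ') : g x' θ - g x θ ≤ g x' θ' - g x θ' := by
  rcases hxx'.eq_or_lt with rfl | hxx'
  · simp
  rcases hθθ'.eq_or_lt with rfl | hθθ'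
  · rfl
  exact (h hx hx' hxx' hθ hθ' hθθ').le

end IncreasingDifferences

section GDuality

variable {Θ : Set ℝ} {g : ℝ → ℝ → ℝ} {v : ℝ → ℝ} {x θ : ℝ}

theorem le_gDualV (hθ : θ ∈ Θ) (x : ℝ) : ((g x θ - v θ : ℝ) : EReal) ≤ gDualV Θ g v x :=
  le_iSup₂_of_le (f := fun θ _ => ((g x θ : EReal) - v θ)) θ hθ le_rfl

theorem mem_gSubdiff_iff :
    x ∈ gSubdiff Θ g v θ ↔ 0 ≤ x ∧ gDualV Θ g v x = ((g x θ - v θ : ℝ) : EReal) :=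
  and_congr_right fun _ => EReal.coe_add_eq_coe_iff

theorem sub_le_of_mem_gSubdiff (hx : x ∈ gSubdiff Θ g v θ) {θ' : ℝ} (hθ' : θ' ∈ Θ) :
    g x θ' - v θ' ≤ g x θ - v θ := by
  have := le_gDualV (v := v) (g := g) hθ' x
  rwa [(mem_gSubdiff_iff.1 hx).2, EReal.coe_le_coe_iff] at this

theorem mem_gSubdiff_of_forall_sub_le (hx : 0 ≤ x) (hθ : θ ∈ Θ)
    (h : ∀ θ' ∈ Θ, g x θ' - v θ' ≤ g x θ - v θ) : x ∈ gSubdiff Θ g v θ :=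
  mem_gSubdiff_iff.2 ⟨hx, le_antisymm
    (iSup₂_le fun θ' hθ' => EReal.coe_le_coe_iff.2 (h θ' hθ')) (le_gDualV hθ x)⟩

theorem gDualV_le_of_gDualW_eq {ψ : ℝ → EReal} (hdual : ∀ θ ∈ Θ, gDualW g ψ θ = v θ)
    (hx : 0 ≤ x) : gDualV Θ g v x ≤ ψ x :=
  iSup₂_le fun θ hθ => EReal.coe_sub_le_coe_iff.1 <|
    hdual θ hθ ▸ le_iSup₂_of_le (f := fun x _ => (g x θ : EReal) - ψ x) x hx le_rfl

theorem gSubdiff_subsingleton (hΘ : Θ ∈ 𝓝 θ) (hg : ∀ x, DifferentiableAt ℝ (g x) θ)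
    (hinj : InjOn (fun x => deriv (g x) θ) (Ici 0)) (hv : DifferentiableAt ℝ v θ) :
    (gSubdiff Θ g v θ).Subsingleton := by
  have hderiv : ∀ x ∈ gSubdiff Θ g v θ, deriv (g x) θ = deriv v θ := fun x hx => by
    have hmax : IsLocalMax (fun t => g x t - v t) θ :=
      Filter.mem_of_superset hΘ fun t ht => sub_le_of_mem_gSubdiff hx ht
    have := hmax.deriv_eq_zero
    rwa [deriv_fun_sub (hg x) hv, sub_eq_zero] at this
  exact fun x hx y hy => hinj hx.1 hy.1 ((hderiv x hx).trans (hderiv y hy).symm)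

end GDuality

section SpenceMirrlees

variable {Θ S : Set ℝ} {g : ℝ → ℝ → ℝ} {v : ℝ → ℝ} {x θ : ℝ}

theorem sub_le_of_mem_gSubdiff_of_le (hg : HasStrictIncreasingDifferences (Ici 0) Θ g)
    {xa θa : ℝ} (hxa : xa ∈ gSubdiff Θ g v θa) (hθa : θa ∈ Θ) (hθ : θ ∈ Θ) (hθθa : θ ≤ θa)
    (hxax : xa ≤ x) : g x θ - v θ ≤ g x θa - v θa := by
  have := hg.sub_le_sub hxa.1 (hxa.1.trans hxax) hxax hθ hθa hθθa
  linarith [sub_le_of_mem_gSubdiff hxa hθ]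

theorem sub_le_of_mem_gSubdiff_of_ge (hg : HasStrictIncreasingDifferences (Ici 0) Θ g)
    {xb θb : ℝ} (hxb : xb ∈ gSubdiff Θ g v θb) (hθb : θb ∈ Θ) (hθ : θ ∈ Θ) (hθbθ : θb ≤ θ)
    (hx : 0 ≤ x) (hxxb : x ≤ xb) : g x θ - v θ ≤ g x θb - v θb := by
  have := hg.sub_le_sub hx hxb.1 hxxb hθb hθ hθbθ
  linarith [sub_le_of_mem_gSubdiff hxb hθ]

theorem monotoneOn_of_mem_gSubdiff (hg : HasStrictIncreasingDifferences (Ici 0) Θ g)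
    (hSΘ : S ⊆ Θ) {X : ℝ → ℝ} (hX : ∀ θ ∈ S, X θ ∈ gSubdiff Θ g v θ) : MonotoneOn X S := by
  intro a ha b hb hab
  rcases hab.eq_or_lt with rfl | hab
  · rfl
  by_contra! hba
  have := hg (hX b hb).1 (hX a ha).1 hba (hSΘ ha) (hSΘ hb) hab
  linarith [sub_le_of_mem_gSubdiff (hX a ha) (hSΘ hb), sub_le_of_mem_gSubdiff (hX b hb) (hSΘ ha)]

/-- As `v^g x ≥ g x θ' - v θ'`, this keeps `g x θ - v^g x` uniformly below its supremum `v θ` for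
large `x`, so the dual problem at `θ` can be maximised over a compact interval. -/
theorem exists_lt_forall_sub_le_of_mem_gSubdiff (hg : HasStrictIncreasingDifferences (Ici 0) Θ g)
    (hθ : θ ∈ Θ) {θ' x' : ℝ} (hθ' : θ' ∈ Θ) (hθθ' : θ < θ') (hx' : x' ∈ gSubdiff Θ g v θ') :
    ∃ c < v θ, ∀ x, x' + 1 ≤ x → g x θ - (g x θ' - v θ') ≤ c := by
  have hx'0 : (0 : ℝ) ≤ x' + 1 := by linarith [hx'.1]
  refine ⟨g (x' + 1) θ - g (x' + 1) θ' + v θ', ?_, fun x hx => ?_⟩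
  · have := hg hx'.1 hx'0 (lt_add_one x') hθ hθ' hθθ'
    linarith [sub_le_of_mem_gSubdiff hx' hθ]
  · have := hg.sub_le_sub hx'0 (hx'0.trans hx) hx hθ hθ' hθθ'.le
    linarith

theorem exists_mem_gSubdiff_eq_gDualV (hg : HasStrictIncreasingDifferences (Ici 0) Θ g)
    (hθ : θ ∈ Θ) {θ' x' : ℝ} (hθ' : θ' ∈ Θ) (hθθ' : θ < θ') (hx' : x' ∈ gSubdiff Θ g v θ')
    {ψ : ℝ → EReal} (husc : UpperSemicontinuousOn (fun x => (g x θ : EReal) - ψ x) (Ici 0))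
    (hdual : gDualW g ψ θ = v θ) (hψ : ∀ x, 0 ≤ x → gDualV Θ g v x ≤ ψ x) :
    ∃ x ∈ gSubdiff Θ g v θ, ψ x = gDualV Θ g v x := by
  obtain ⟨c, hc, htail⟩ := exists_lt_forall_sub_le_of_mem_gSubdiff hg hθ hθ' hθθ' hx'
  have htail' : ∀ x, x' + 1 ≤ x → (g x θ : EReal) - ψ x ≤ c := fun x hx =>
    EReal.coe_sub_le_coe_iff.2 <| (EReal.coe_le_coe_iff.2 (by linarith [htail x hx])).trans <|
      (le_gDualV hθ' x).trans (hψ x (by linarith [hx'.1]))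
  obtain ⟨x, hx, hmax⟩ := husc.exists_eq_biSup_Ici htail' (by
    rw [← gDualW, hdual]
    exact_mod_cast hc)
  rw [← gDualW, hdual, EReal.coe_sub_eq_coe_iff] at hmax
  have hmem : x ∈ gSubdiff Θ g v θ :=
    mem_gSubdiff_iff.2 ⟨hx, le_antisymm ((hψ x hx).trans hmax.le) (le_gDualV hθ x)⟩
  exact ⟨x, hmem, hmax.trans (mem_gSubdiff_iff.1 hmem).2.symm⟩

/-- `g x · - v` attains its maximum on `Icc θa θb`, and outside this interval it is bounded by its
values at the endpoints, so the maximum is global. -/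
theorem exists_mem_gSubdiff_of_le_of_le (hg : HasStrictIncreasingDifferences (Ici 0) Θ g)
    {θa θb xa xb : ℝ} (hab : θa ≤ θb) (hΘ : Icc θa θb ⊆ Θ) (hgx : Continuous (g x))
    (hv : ContinuousOn v (Icc θa θb)) (hxa : xa ∈ gSubdiff Θ g v θa)
    (hxb : xb ∈ gSubdiff Θ g v θb) (hxax : xa ≤ x) (hxxb : x ≤ xb) :
    ∃ θ ∈ Icc θa θb, x ∈ gSubdiff Θ g v θ := by
  obtain ⟨θ, hθ, hmax⟩ := isCompact_Icc.exists_isMaxOn (nonempty_Icc.2 hab)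
    (hgx.continuousOn.sub hv)
  have hθa : θa ∈ Θ := hΘ (left_mem_Icc.2 hab)
  have hθb : θb ∈ Θ := hΘ (right_mem_Icc.2 hab)
  have hx : 0 ≤ x := hxa.1.trans hxax
  refine ⟨θ, hθ, mem_gSubdiff_of_forall_sub_le hx (hΘ hθ) fun θ' hθ' => ?_⟩
  rcases le_or_gt θ' θa with h | h
  · exact (sub_le_of_mem_gSubdiff_of_le hg hxa hθa hθ' h hxax).trans
      (hmax (left_mem_Icc.2 hab))
  rcases le_or_gt θb θ' with h' | h'
  · exact (sub_le_of_mem_gSubdiff_of_ge hg hxb hθb hθ' h' hx hxxb).trans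
      (hmax (right_mem_Icc.2 hab))
  exact hmax ⟨h.le, h'.le⟩

theorem exists_mem_gSubdiff_of_pos (hg : HasStrictIncreasingDifferences (Ici 0) Θ g)
    (hgx : Continuous (g x)) (hS : S.OrdConnected) (hSΘ : S ⊆ Θ) (hv : ContinuousOn v S)
    {X : ℝ → ℝ} (hX : ∀ θ ∈ S, X θ ∈ gSubdiff Θ g v θ) (hinf : sInf (X '' S) = 0)
    (hunb : ¬ BddAbove (X '' S)) (hx : 0 < x) : ∃ θ ∈ S, x ∈ gSubdiff Θ g v θ := by
  obtain ⟨_, ⟨θa, hθa, rfl⟩, hxa⟩ :=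
    exists_lt_of_csInf_lt (nonempty_of_not_bddAbove hunb) (hinf ▸ hx)
  obtain ⟨_, ⟨θb, hθb, rfl⟩, hxb⟩ := not_bddAbove_iff.1 hunb x
  have hab := (monotoneOn_of_mem_gSubdiff hg hSΘ hX).reflect_lt hθa hθb (hxa.trans hxb)
  obtain ⟨θ, hθ, hxθ⟩ := exists_mem_gSubdiff_of_le_of_le hg hab.le ((hS.out hθa hθb).trans hSΘ)
    hgx (hv.mono (hS.out hθa hθb)) (hX θa hθa) (hX θb hθb) hxa.le hxb.le
  exact ⟨θ, hS.out hθa hθb hθ, hxθ⟩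

/-- With `z = X τ ∈ ∂^g v(τ)` small and `τ ≤ θ₁`, increasing differences give
`g 0 τ - v τ ≥ ψ z - (g z θ₁ - g 0 θ₁)`, which the upper semicontinuity of `g · θ₁ - ψ` at `0`
(where `ψ 0 = 0`) bounds from below by any `-ε`. -/
theorem zero_le_gDualV_zero (hg : HasStrictIncreasingDifferences (Ici 0) Θ g) (hSΘ : S ⊆ Θ)
    {X : ℝ → ℝ} (hX : ∀ θ ∈ S, X θ ∈ gSubdiff Θ g v θ) (hinf : sInf (X '' S) = 0)
    {ψ : ℝ → EReal} (hψX : ∀ θ ∈ S, ψ (X θ) ≤ gDualV Θ g v (X θ)) {θ₁ : ℝ} (hθ₁ : θ₁ ∈ S)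
    (husc : UpperSemicontinuousWithinAt (fun x => (g x θ₁ : EReal) - ψ x) (Ici 0) 0)
    (hψ0 : ψ 0 = 0) : 0 ≤ gDualV Θ g v 0 := by
  refine EReal.ge_of_forall_gt_iff_ge.1 fun y hy => ?_
  have hy : y < 0 := by exact_mod_cast hy
  obtain ⟨δ, hδ, hsub⟩ := mem_nhdsGE_iff_exists_Ico_subset.1 <|
    husc ((g 0 θ₁ - y : ℝ) : EReal) (by
      change (g 0 θ₁ : EReal) - ψ 0 < _
      rw [hψ0, sub_zero]
      exact_mod_cast (by linarith))
  obtain ⟨_, ⟨τ₀, hτ₀, rfl⟩, hτ₀δ⟩ :=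
    exists_lt_of_csInf_lt ⟨X θ₁, mem_image_of_mem X hθ₁⟩ (hinf ▸ hδ : sInf (X '' S) < δ)
  obtain ⟨τ, hτ, hττ₀, hτθ₁⟩ : ∃ τ ∈ S, τ ≤ τ₀ ∧ τ ≤ θ₁ :=
    ⟨min τ₀ θ₁, by rcases min_choice τ₀ θ₁ with h | h <;> rw [h] <;> assumption,
      min_le_left _ _, min_le_right _ _⟩
  have hz : X τ ∈ Ico 0 δ :=
    ⟨(hX τ hτ).1, ((monotoneOn_of_mem_gSubdiff hg hSΘ hX) hτ hτ₀ hττ₀).trans_lt hτ₀δ⟩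
  have hψz := (EReal.coe_sub_lt_coe_iff.1 (hsub hz)).trans_le <|
    (hψX τ hτ).trans (mem_gSubdiff_iff.1 (hX τ hτ)).2.le
  have hψz' : g (X τ) θ₁ - (g 0 θ₁ - y) < g (X τ) τ - v τ := by exact_mod_cast hψz
  have := hg.sub_le_sub self_mem_Ici hz.1 hz.1 (hSΘ hτ) (hSΘ hθ₁) hτθ₁
  calc (y : EReal) ≤ ((g 0 τ - v τ : ℝ) : EReal) := by exact_mod_cast (by linarith)
    _ ≤ gDualV Θ g v 0 := le_gDualV (hSΘ hτ) 0

end SpenceMirrlees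

theorem at_most_one_consistent_dual_general
    (Θ : Set ℝ) (hΘI : Θ.OrdConnected)
    (g : ℝ → ℝ → ℝ) (hSM : SpenceMirrlees (Ici 0) Θ g)
    (v : ℝ → ℝ)
    (θm θR : EReal)
    (hθm : θm = sInf {t : EReal | ∃ θ ∈ Θ, t = (θ : EReal)})
    (hθR : θR = sSup {t : EReal | ∃ θ ∈ Θ, (gSubdiff Θ g v θ).Nonempty ∧ t = (θ : EReal)})
    (hCD : ContDiffOn ℝ 1 v {θ : ℝ | θm < (θ : EReal) ∧ (θ : EReal) < θR})
    (hne : ∀ θ : ℝ, θm < (θ : EReal) → (θ : EReal) < θR → (gSubdiff Θ g v θ).Nonempty)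
    (hlim : ∀ xsel : ℝ → ℝ,
      (∀ θ : ℝ, θm < (θ : EReal) → (θ : EReal) < θR → xsel θ ∈ gSubdiff Θ g v θ) →
      sInf (xsel '' {θ : ℝ | θm < (θ : EReal) ∧ (θ : EReal) < θR}) = 0 ∧
      ¬ BddAbove (xsel '' {θ : ℝ | θm < (θ : EReal) ∧ (θ : EReal) < θR})) :
    ∀ ψ : ℝ → EReal, ψ 0 = 0 →
      (∀ θ ∈ Θ, UpperSemicontinuousOn (fun x => (g x θ : EReal) - ψ x) (Ici 0)) →
      (∀ θ ∈ Θ, gDualW g ψ θ = (v θ : EReal)) →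
      ∀ x : ℝ, 0 ≤ x → ψ x = gDualV Θ g v x := by
  intro ψ hψ0 husc hdual x hx
  obtain ⟨hg, -, hsm⟩ := hSM
  have hgx : ∀ x, ContDiff ℝ 2 (g x) := fun x => hg.comp (contDiff_const.prodMk contDiff_id)
  have hid : HasStrictIncreasingDifferences (Ici 0) Θ g :=
    hasStrictIncreasingDifferences_of_strictMonoOn_deriv hΘI
      (fun x => (hgx x).differentiable two_ne_zero) hsm
  set S := {θ : ℝ | θm < (θ : EReal) ∧ (θ : EReal) < θR}
  have hSΘ : S ⊆ Θ := fun θ ⟨h₁, h₂⟩ => by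
    obtain ⟨_, ⟨a, ha, rfl⟩, hat⟩ := sInf_lt_iff.1 (hθm ▸ h₁)
    obtain ⟨_, ⟨b, hb, -, rfl⟩, hbt⟩ := lt_sSup_iff.1 (hθR ▸ h₂)
    exact hΘI.out ha hb ⟨(EReal.coe_lt_coe_iff.1 hat).le, (EReal.coe_lt_coe_iff.1 hbt).le⟩
  have hSo : IsOpen S := isOpen_Ioo.preimage continuous_coe_real_ereal
  have hψ : ∀ x, 0 ≤ x → gDualV Θ g v x ≤ ψ x := fun x => gDualV_le_of_gDualW_eq hdual
  have hψS : ∀ θ ∈ S, ∀ x ∈ gSubdiff Θ g v θ, ψ x = gDualV Θ g v x := by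
    intro θ hθ y hy
    obtain ⟨_, ⟨θ', hθ', ⟨x', hx'⟩, rfl⟩, hθθ'⟩ := lt_sSup_iff.1 (hθR ▸ hθ.2)
    obtain ⟨xh, hxh, hψxh⟩ := exists_mem_gSubdiff_eq_gDualV hid (hSΘ hθ) hθ'
      (EReal.coe_lt_coe_iff.1 hθθ') hx' (husc θ (hSΘ hθ)) (hdual θ (hSΘ hθ)) hψ
    have hsub := gSubdiff_subsingleton (Filter.mem_of_superset (hSo.mem_nhds hθ) hSΘ)
      (fun x => ((hgx x).differentiable two_ne_zero).differentiableAt) (hsm θ (hSΘ hθ)).injOn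
      ((hCD.contDiffAt (hSo.mem_nhds hθ)).differentiableAt one_ne_zero)
    rwa [hsub hxh hy] at hψxh
  choose! X hX using hne
  obtain ⟨hinf, hunb⟩ := hlim X hX
  have hXS : ∀ θ ∈ S, X θ ∈ gSubdiff Θ g v θ := fun θ hθ => hX θ hθ.1 hθ.2
  rcases hx.eq_or_lt with rfl | hx
  · obtain ⟨θ₁, hθ₁⟩ : S.Nonempty := (nonempty_of_not_bddAbove hunb).of_image
    refine le_antisymm ?_ (hψ 0 le_rfl)
    rw [hψ0]
    exact zero_le_gDualV_zero hid hSΘ hXS hinf (fun θ hθ => (hψS θ hθ _ (hXS θ hθ)).le) hθ₁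
      (husc θ₁ (hSΘ hθ₁) 0 self_mem_Ici) hψ0
  · have hSI : S.OrdConnected := ordConnected_Ioo.preimage_mono EReal.coe_strictMono.monotone
    obtain ⟨θ, hθ, hxθ⟩ := exists_mem_gSubdiff_of_pos hid (hgx x).continuous hSI hSΘ
      hCD.continuousOn hXS hinf hunb hx
    exact hψS θ hθ x hxθ

/-- Uniqueness for the inverse problem.  Let `θm` be the left endpoint of `Θ` and
`θR = sup {θ ∈ Θ : ∂^g v(θ) ≠ ∅}` (both in `EReal`).  Suppose `v` is `g`-convex and
C¹ on `(θm, θR)`, `∂^g v(θ) ≠ ∅` for every `θ ∈ (θm, θR)`, and every selection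
`x*(θ) ∈ ∂^g v(θ)` on `(θm, θR)` has infimum `0` (i.e. `lim_{θ↓θm} x* = 0`, `x*` being
nondecreasing) and is unbounded above (i.e. `lim_{θ↑θR} x* = ∞`).  Then any
`ψ : [0,∞) → ℝ∪{+∞}` with `ψ(0) = 0`, with `x ↦ g(x,θ) - ψ(x)` upper semicontinuous
for each `θ ∈ Θ`, and with `ψ^g = v` on `Θ`, equals `v^g`; in particular there is at
most one such `ψ`. -/
theorem at_most_one_consistent_dual
    (Θ : Set ℝ) (hΘ : Θ.Nonempty) (hΘI : Θ.OrdConnected)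
    (g : ℝ → ℝ → ℝ) (hSM : SpenceMirrlees (Ici 0) Θ g)
    (v : ℝ → ℝ) (hvconv : GConvex Θ g v)
    (θm θR : EReal)
    (hθm : θm = sInf {t : EReal | ∃ θ ∈ Θ, t = (θ : EReal)})
    (hθR : θR = sSup {t : EReal | ∃ θ ∈ Θ, (gSubdiff Θ g v θ).Nonempty ∧ t = (θ : EReal)})
    (hCD : ContDiffOn ℝ 1 v {θ : ℝ | θm < (θ : EReal) ∧ (θ : EReal) < θR})
    (hne : ∀ θ : ℝ, θm < (θ : EReal) → (θ : EReal) < θR → (gSubdiff Θ g v θ).Nonempty)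
    (hlim : ∀ xsel : ℝ → ℝ,
      (∀ θ : ℝ, θm < (θ : EReal) → (θ : EReal) < θR → xsel θ ∈ gSubdiff Θ g v θ) →
      sInf (xsel '' {θ : ℝ | θm < (θ : EReal) ∧ (θ : EReal) < θR}) = 0 ∧
      ¬ BddAbove (xsel '' {θ : ℝ | θm < (θ : EReal) ∧ (θ : EReal) < θR})) :
    ∀ ψ : ℝ → EReal, ψ 0 = 0 →
      (∀ θ ∈ Θ, UpperSemicontinuousOn (fun x => (g x θ : EReal) - ψ x) (Ici 0)) →
      (∀ θ ∈ Θ, gDualW g ψ θ = (v θ : EReal)) →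
      ∀ x : ℝ, 0 ≤ x → ψ x = gDualV Θ g v x :=
  at_most_one_consistent_dual_general Θ hΘI g hSM v θm θR hθm hθR hCD hne hlim
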